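/- arXiv:0909.1399 — 3 statements merged into one kernel-verified Lean document; each statement's English description precedes it below -/
import Mathlib

section
/- Let α(v) = √(∑ aᵢⱼ vⁱvʲ) with (aᵢⱼ) symmetric positive definite, β(v) = ∑ bᵢvⁱ linear with ∑ aⁱʲbᵢbⱼ < 1, F = α + β, and let (cᵢⱼ) be a real n×n matrix, bⁱ = ∑ⱼ aⁱʲbⱼ. Define Yⁱ(v) = ∑ⱼₖ cⱼₖ (vⁱ/F(v)) { vʲvᵏ + (bᵏvʲ − bʲvᵏ)α(v) }. Then ∑ᵢ ∂Yⁱ/∂vⁱ(v) = ((n+1)/2) ∑ᵢⱼ (cᵢⱼ + cⱼᵢ) vⁱvʲ/F(v) + (n+1) ∑ᵢⱼ (cᵢⱼ − cⱼᵢ) bʲ α(v)vⁱ/F(v) for all v ≠ 0. -/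
/-!
Write `Yⁱ(v) = vⁱ G(v)` with `G = N / F`, where `N(v) = ∑ⱼₖ cⱼₖ (vʲvᵏ + (bᵏvʲ − bʲvᵏ) α(v))`.
Since `N` is positively 2-homogeneous and `F` is positively 1-homogeneous, `G` is positively
1-homogeneous, so `∑ᵢ ∂ᵢ(vⁱ G) = n G + dG(v) v = (n + 1) G` by Euler's theorem. Symmetrizing the
double sum `N` in `(j, k)` turns `(n + 1) G` into the stated right-hand side.

Differentiability of `G` at `v ≠ 0` needs `F(v) ≠ 0`: with `w = A⁻¹ b`, Cauchy–Schwarz for the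
inner product defined by `A` gives `(b ⬝ᵥ v)² = (v ⬝ᵥ A w)² ≤ (b ⬝ᵥ A⁻¹ b) α(v)² < α(v)²`.
-/

open Matrix

section QuadraticForm

variable {ι : Type*} [Fintype ι]

theorem Matrix.PosSemidef.sq_dotProduct_mulVec_le {A : Matrix ι ι ℝ} (hA : A.PosSemidef)
    (x y : ι → ℝ) : (x ⬝ᵥ A *ᵥ y) ^ 2 ≤ (x ⬝ᵥ A *ᵥ x) * (y ⬝ᵥ A *ᵥ y) := by
  have hsymm : y ⬝ᵥ A *ᵥ x = x ⬝ᵥ A *ᵥ y := by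
    rw [dotProduct_mulVec, ← mulVec_transpose, (isHermitian_iff_isSymm.1 hA.isHermitian).eq,
      dotProduct_comm]
  have hquad : ∀ t : ℝ,
      0 ≤ (y ⬝ᵥ A *ᵥ y) * (t * t) + 2 * (x ⬝ᵥ A *ᵥ y) * t + x ⬝ᵥ A *ᵥ x := by
    intro t
    have := hA.dotProduct_mulVec_nonneg (x + t • y)
    simp only [star_trivial, mulVec_add, mulVec_smul, dotProduct_add, add_dotProduct,
      smul_dotProduct, dotProduct_smul, smul_eq_mul, hsymm] at this
    linarith
  have hdiscr := discrim_le_zero hquad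
  rw [discrim] at hdiscr
  linarith

theorem Matrix.PosDef.sqrt_dotProduct_mulVec_add_dotProduct_pos [DecidableEq ι]
    {A : Matrix ι ι ℝ} (hA : A.PosDef) {b : ι → ℝ} (hb : b ⬝ᵥ A⁻¹ *ᵥ b < 1) {v : ι → ℝ}
    (hv : v ≠ 0) : 0 < √(v ⬝ᵥ A *ᵥ v) + b ⬝ᵥ v := by
  set w := A⁻¹ *ᵥ b
  have hAw : A *ᵥ w = b := by
    rw [mulVec_mulVec, mul_nonsing_inv A ((isUnit_iff_isUnit_det A).1 hA.isUnit), one_mulVec]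
  have hq : 0 < v ⬝ᵥ A *ᵥ v := by simpa using hA.dotProduct_mulVec_pos hv
  have hcs := hA.posSemidef.sq_dotProduct_mulVec_le v w
  rw [hAw, dotProduct_comm w b, dotProduct_comm v b] at hcs
  have hsq := Real.sq_sqrt hq.le
  have hsqrt := Real.sqrt_pos.2 hq
  nlinarith

theorem Matrix.sqrt_dotProduct_mulVec_smul (A : Matrix ι ι ℝ) {t : ℝ} (ht : 0 ≤ t)
    (v : ι → ℝ) : √((t • v) ⬝ᵥ A *ᵥ (t • v)) = t * √(v ⬝ᵥ A *ᵥ v) := by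
  rw [mulVec_smul, smul_dotProduct, dotProduct_smul, smul_eq_mul, smul_eq_mul, ← mul_assoc,
    Real.sqrt_mul (mul_self_nonneg t), Real.sqrt_mul_self ht]

theorem Matrix.PosDef.differentiableAt_sqrt_dotProduct_mulVec {A : Matrix ι ι ℝ}
    (hA : A.PosDef) {v : ι → ℝ} (hv : v ≠ 0) :
    DifferentiableAt ℝ (fun w => √(w ⬝ᵥ A *ᵥ w)) v := by
  have hq : v ⬝ᵥ A *ᵥ v ≠ 0 := by simpa using (hA.dotProduct_mulVec_pos hv).ne'
  refine DifferentiableAt.sqrt ?_ hq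
  simp only [dotProduct, mulVec]
  fun_prop

end QuadraticForm

theorem fderiv_apply_self_of_pos_homogeneous {E : Type*} [NormedAddCommGroup E]
    [NormedSpace ℝ E] {G : E → ℝ} {v : E} (hG : DifferentiableAt ℝ G v)
    (hhom : ∀ t : ℝ, 0 < t → G (t • v) = t * G v) : fderiv ℝ G v v = G v := by
  have hray : HasDerivAt (fun t : ℝ => G (t • v)) (fderiv ℝ G v v) 1 := by
    have hsmul : HasDerivAt (fun t : ℝ => t • v) v 1 := by
      simpa using (hasDerivAt_id (1 : ℝ)).smul_const v
    exact HasFDerivAt.comp_hasDerivAt 1 (by rw [one_smul]; exact hG.hasFDerivAt) hsmul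
  have hline : (fun t : ℝ => G (t • v)) =ᶠ[nhds 1] fun t => t * G v := by
    filter_upwards [lt_mem_nhds one_pos] with t ht using hhom t ht
  simpa using hray.unique (((hasDerivAt_id 1).mul_const (G v)).congr_of_eventuallyEq hline)

theorem sum_fderiv_apply_mul_apply_single {ι : Type*} [Fintype ι] [DecidableEq ι]
    {G : (ι → ℝ) → ℝ} {v : ι → ℝ} (hG : DifferentiableAt ℝ G v) :
    ∑ i, fderiv ℝ (fun w => w i * G w) v (Pi.single i 1)
      = Fintype.card ι * G v + fderiv ℝ G v v := by
  have hprod : ∀ i, fderiv ℝ (fun w => w i * G w) v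
      = v i • fderiv ℝ G v + G v • ContinuousLinearMap.proj i :=
    fun i => ((hasFDerivAt_apply i v).mul hG.hasFDerivAt).fderiv
  have hexpand : fderiv ℝ G v v = ∑ i, v i * fderiv ℝ G v (Pi.single i 1) := by
    conv_lhs => arg 2; rw [pi_eq_sum_univ' v]
    simp [map_sum]
  simp [hprod, hexpand, Finset.sum_add_distrib, add_comm]

theorem Finset.sum_sum_eq_of_add_swap_eq {ι M : Type*} [AddCommGroup M] [IsAddTorsionFree M]
    (s : Finset ι) {f g : ι → ι → M} (h : ∀ i j, f i j + f j i = g i j + g j i) :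
    ∑ i ∈ s, ∑ j ∈ s, f i j = ∑ i ∈ s, ∑ j ∈ s, g i j := by
  have hsymm : ∀ f : ι → ι → M,
      2 • ∑ i ∈ s, ∑ j ∈ s, f i j = ∑ i ∈ s, ∑ j ∈ s, (f i j + f j i) := fun f => by
    rw [two_nsmul]
    nth_rewrite 2 [Finset.sum_comm]
    simp only [Finset.sum_add_distrib]
  apply nsmul_right_injective two_ne_zero
  simp only [hsymm, h]

theorem stmt5_general {n : ℕ} (A : Matrix (Fin n) (Fin n) ℝ) (hA : A.PosDef)
    (b : Fin n → ℝ) (hb : b ⬝ᵥ A⁻¹ *ᵥ b < 1)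
    (c : Matrix (Fin n) (Fin n) ℝ)
    (α : (Fin n → ℝ) → ℝ) (hα : ∀ v, α v = Real.sqrt (v ⬝ᵥ A *ᵥ v))
    (F : (Fin n → ℝ) → ℝ) (hF : ∀ v, F v = α v + b ⬝ᵥ v)
    (bup : Fin n → ℝ)
    (Y : Fin n → (Fin n → ℝ) → ℝ)
    (hY : ∀ i : Fin n, ∀ v : Fin n → ℝ,
      Y i v = ∑ j : Fin n, ∑ k : Fin n,
        c j k * (v i / F v) * (v j * v k + (bup k * v j - bup j * v k) * α v))
    (v : Fin n → ℝ) (hv : v ≠ 0) :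
    ∑ i : Fin n, fderiv ℝ (Y i) v (Pi.single i 1)
      = ((n + 1 : ℝ) / 2) * ∑ i : Fin n, ∑ j : Fin n, (c i j + c j i) * v i * v j / F v
        + (n + 1 : ℝ) * ∑ i : Fin n, ∑ j : Fin n,
            (c i j - c j i) * bup j * α v * v i / F v := by
  set N : (Fin n → ℝ) → ℝ :=
    fun w => ∑ j, ∑ k, c j k * (w j * w k + (bup k * w j - bup j * w k) * α w) with hN
  have hYN : ∀ i, Y i = fun w => w i * (N w / F w) := fun i => funext fun w => by
    simp only [hY, hN, Finset.sum_div, Finset.mul_sum]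
    exact Finset.sum_congr rfl fun j _ => Finset.sum_congr rfl fun k _ => by ring
  have hαd : DifferentiableAt ℝ α v := funext hα ▸ hA.differentiableAt_sqrt_dotProduct_mulVec hv
  have hFv : F v ≠ 0 := by
    rw [hF, hα]; exact (hA.sqrt_dotProduct_mulVec_add_dotProduct_pos hb hv).ne'
  have hGd : DifferentiableAt ℝ (fun w => N w / F w) v := by
    simp only [hN, funext hF, dotProduct]
    fun_prop (disch := simpa [hF, dotProduct] using hFv)
  have hGhom : ∀ t : ℝ, 0 < t → N (t • v) / F (t • v) = t * (N v / F v) := by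
    intro t ht
    have hαt : α (t • v) = t * α v := by rw [hα, hα, sqrt_dotProduct_mulVec_smul A ht.le]
    have hNt : N (t • v) = t ^ 2 * N v := by
      simp only [hN, hαt, Pi.smul_apply, smul_eq_mul, Finset.mul_sum]
      exact Finset.sum_congr rfl fun j _ => Finset.sum_congr rfl fun k _ => by ring
    rw [hNt, hF, hF, hαt, dotProduct_smul, smul_eq_mul, ← mul_add]
    field_simp
  have hNsymm : N v = ∑ i, ∑ j,
      ((c i j + c j i) * v i * v j / 2 + (c i j - c j i) * bup j * α v * v i) :=
    Finset.sum_sum_eq_of_add_swap_eq _ fun i j => by ring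
  simp only [hYN]
  rw [sum_fderiv_apply_mul_apply_single hGd, fderiv_apply_self_of_pos_homogeneous hGd hGhom,
    Fintype.card_fin, hNsymm]
  simp only [Finset.mul_sum, Finset.sum_div, ← Finset.sum_add_distrib]
  exact Finset.sum_congr rfl fun i _ => Finset.sum_congr rfl fun j _ => by ring

/-- Divergence computation for the term `Yⁱ` of the Randers geodesic spray
coefficients:
`∑ᵢ ∂Yⁱ/∂vⁱ(v) = ((n+1)/2) ∑ᵢⱼ (cᵢⱼ+cⱼᵢ) vⁱvʲ/F(v) + (n+1) ∑ᵢⱼ (cᵢⱼ−cⱼᵢ) bʲ α(v)vⁱ/F(v)`. -/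
theorem stmt5 {n : ℕ} (A : Matrix (Fin n) (Fin n) ℝ) (hA : A.PosDef) (hAsymm : A.IsSymm)
    (b : Fin n → ℝ) (hb : b ⬝ᵥ A⁻¹ *ᵥ b < 1)
    (c : Matrix (Fin n) (Fin n) ℝ)
    (α : (Fin n → ℝ) → ℝ) (hα : ∀ v, α v = Real.sqrt (v ⬝ᵥ A *ᵥ v))
    (F : (Fin n → ℝ) → ℝ) (hF : ∀ v, F v = α v + b ⬝ᵥ v)
    (bup : Fin n → ℝ) (hbup : ∀ i, bup i = ∑ j : Fin n, A⁻¹ i j * b j)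
    (Y : Fin n → (Fin n → ℝ) → ℝ)
    (hY : ∀ i : Fin n, ∀ v : Fin n → ℝ,
      Y i v = ∑ j : Fin n, ∑ k : Fin n,
        c j k * (v i / F v) * (v j * v k + (bup k * v j - bup j * v k) * α v))
    (v : Fin n → ℝ) (hv : v ≠ 0) :
    ∑ i : Fin n, fderiv ℝ (Y i) v (Pi.single i 1)
      = ((n + 1 : ℝ) / 2) * ∑ i : Fin n, ∑ j : Fin n, (c i j + c j i) * v i * v j / F v
        + (n + 1 : ℝ) * ∑ i : Fin n, ∑ j : Fin n,
            (c i j - c j i) * bup j * α v * v i / F v :=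
  stmt5_general A hA b hb c α hα F hF bup Y hY v hv
end

section
/- Let α(v) = √(∑ aᵢⱼvⁱvʲ) with (aᵢⱼ) symmetric positive definite (n ≥ 2), β(v) = ∑ bᵢvⁱ with ‖β‖² = ∑ aⁱʲbᵢbⱼ satisfying 0 < ‖β‖ < 1, and F = α + β. Suppose S(v,v)/F(v) is a linear function of v on ℝⁿ \ {0}, where S is a symmetric bilinear form. Then S = 0. -/
/-!
Since `‖β‖ < 1`, Cauchy–Schwarz for the inner product given by `A` yields `|β(v)| < α(v)`, so
`F > 0` away from `0` and the hypothesis reads `S(v,v) = L(v) F(v)`. The left side is even in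
`v`, while `α` is even and `β`, `L` are odd; comparing `v` with `-v` gives `L(v) α(v) = 0`, hence
`L = 0`, so `S(v,v) = 0` for all `v`, and a symmetric bilinear form with this property vanishes.
-/

open Matrix

theorem Matrix.PosSemidef.dotProduct_mulVec_sq_le {ι : Type*} [Fintype ι]
    {A : Matrix ι ι ℝ} (hA : A.PosSemidef) (x y : ι → ℝ) :
    (x ⬝ᵥ A *ᵥ y) ^ 2 ≤ (x ⬝ᵥ A *ᵥ x) * (y ⬝ᵥ A *ᵥ y) := by
  let := A.toSeminormedAddCommGroup hA
  let := A.toInnerProductSpace hA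
  have inner_eq (u v : ι → ℝ) : inner ℝ u v = u ⬝ᵥ A *ᵥ v := by
    change (A *ᵥ v) ⬝ᵥ star u = _
    simp [dotProduct_comm]
  rw [sq, ← inner_eq, ← inner_eq, ← inner_eq]
  exact real_inner_mul_inner_self_le x y

theorem LinearMap.BilinForm.eq_zero_of_isSymm_of_isAlt {M : Type*} [AddCommGroup M]
    [Module ℝ M] {B : LinearMap.BilinForm ℝ M} (hS : B.IsSymm) (hA : B.IsAlt) : B = 0 := by
  ext x y
  have h_neg : -B x y = B y x := hA.neg_eq x y
  have h_symm : B x y = B y x := hS.eq x y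
  rw [LinearMap.zero_apply, LinearMap.zero_apply]
  linarith

theorem LinearMap.BilinForm.isAlt_of_apply_self_eq_mul_add {M : Type*} [AddCommGroup M]
    [Module ℝ M] {S : LinearMap.BilinForm ℝ M} {L : M →ₗ[ℝ] ℝ} {α β : M → ℝ}
    (hα_neg : ∀ v, α (-v) = α v) (hα : ∀ v, v ≠ 0 → α v ≠ 0) (hβ_neg : ∀ v, β (-v) = -β v)
    (h : ∀ v, v ≠ 0 → S v v = L v * (α v + β v)) : S.IsAlt := by
  intro v
  rcases eq_or_ne v 0 with rfl | hv
  · simp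
  have h_pos := h v hv
  have h_neg := h (-v) (neg_ne_zero.2 hv)
  simp only [map_neg, LinearMap.neg_apply, neg_neg, hα_neg, hβ_neg] at h_neg
  have hL : L v = 0 := by
    have : L v * α v = 0 := by linarith
    exact (mul_eq_zero.1 this).resolve_right (hα v hv)
  rw [h_pos, hL, zero_mul]

/-- Cauchy–Schwarz for the `A`-inner product, applied to `v` and the `A`-dual `A⁻¹ b` of `b`. -/
theorem Matrix.PosDef.abs_dotProduct_lt_sqrt {ι : Type*} [Fintype ι] [DecidableEq ι]
    {A : Matrix ι ι ℝ} {b : ι → ℝ} (hA : A.PosDef) (hb : b ⬝ᵥ A⁻¹ *ᵥ b < 1)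
    {v : ι → ℝ} (hv : v ≠ 0) : |b ⬝ᵥ v| < √(v ⬝ᵥ A *ᵥ v) := by
  set w := A⁻¹ *ᵥ b
  have hAw : A *ᵥ w = b := by
    rw [mulVec_mulVec, mul_nonsing_inv _ ((isUnit_iff_isUnit_det A).1 hA.isUnit), one_mulVec]
  have hw (u : ι → ℝ) : w ⬝ᵥ A *ᵥ u = b ⬝ᵥ u := by
    rw [dotProduct_mulVec, ← mulVec_transpose, isHermitian_iff_isSymm.1 hA.isHermitian, hAw]
  have hq : 0 < v ⬝ᵥ A *ᵥ v := by simpa using hA.dotProduct_mulVec_pos hv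
  have h_sq : (b ⬝ᵥ v) ^ 2 < v ⬝ᵥ A *ᵥ v := calc
    (b ⬝ᵥ v) ^ 2 ≤ (b ⬝ᵥ w) * (v ⬝ᵥ A *ᵥ v) := by
      simpa only [hw] using hA.posSemidef.dotProduct_mulVec_sq_le w v
    _ < v ⬝ᵥ A *ᵥ v := by nlinarith
  rwa [Real.lt_sqrt (abs_nonneg _), sq_abs]

theorem stmt6_general {n : ℕ}
    (A : Matrix (Fin n) (Fin n) ℝ) (hA : A.PosDef)
    (b : Fin n → ℝ) (hb1 : b ⬝ᵥ A⁻¹ *ᵥ b < 1)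
    (α : (Fin n → ℝ) → ℝ) (hα : ∀ v, α v = Real.sqrt (v ⬝ᵥ A *ᵥ v))
    (F : (Fin n → ℝ) → ℝ) (hF : ∀ v, F v = α v + b ⬝ᵥ v)
    (S : LinearMap.BilinForm ℝ (Fin n → ℝ)) (hS : S.IsSymm)
    (L : (Fin n → ℝ) →ₗ[ℝ] ℝ)
    (hlin : ∀ v : Fin n → ℝ, v ≠ 0 → S v v / F v = L v) :
    S = 0 := by
  have hF_pos (v : Fin n → ℝ) (hv : v ≠ 0) : 0 < F v := by
    rw [hF, hα]
    linarith [abs_lt.1 (hA.abs_dotProduct_lt_sqrt hb1 hv)]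
  refine S.eq_zero_of_isSymm_of_isAlt hS <|
    S.isAlt_of_apply_self_eq_mul_add (L := L) (α := α) (β := (b ⬝ᵥ ·)) ?_ ?_ ?_ ?_
  · simp [hα, mulVec_neg]
  · intro v hv
    rw [hα]
    exact (Real.sqrt_pos.2 (by simpa using hA.dotProduct_mulVec_pos hv)).ne'
  · exact dotProduct_neg b
  · intro v hv
    rw [← hF, ← hlin v hv, div_mul_cancel₀ _ (hF_pos v hv).ne']

/-- If `S(v,v)/F(v)` is linear in `v` for a Randers metric `F = α + β`
with `0 < ‖β‖ < 1` and `n ≥ 2`, then the symmetric bilinear form `S` vanishes. -/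
theorem stmt6 {n : ℕ} (hn : 2 ≤ n)
    (A : Matrix (Fin n) (Fin n) ℝ) (hA : A.PosDef) (hAsymm : A.IsSymm)
    (b : Fin n → ℝ) (hb0 : 0 < b ⬝ᵥ A⁻¹ *ᵥ b) (hb1 : b ⬝ᵥ A⁻¹ *ᵥ b < 1)
    (α : (Fin n → ℝ) → ℝ) (hα : ∀ v, α v = Real.sqrt (v ⬝ᵥ A *ᵥ v))
    (F : (Fin n → ℝ) → ℝ) (hF : ∀ v, F v = α v + b ⬝ᵥ v)
    (S : LinearMap.BilinForm ℝ (Fin n → ℝ)) (hS : S.IsSymm)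
    (L : (Fin n → ℝ) →ₗ[ℝ] ℝ)
    (hlin : ∀ v : Fin n → ℝ, v ≠ 0 → S v v / F v = L v) :
    S = 0 :=
  stmt6_general A hA b hb1 α hα F hF S hS L hlin
end

section
/- Let A be a real symmetric positive definite n×n matrix, b ∈ ℝⁿ with bᵀA⁻¹b < 1, and F(v) = √(vᵀAv) + bᵀv. Then the Lebesgue volume of the unit ball {v ∈ ℝⁿ : F(v) < 1} equals ωₙ / ((1 − bᵀA⁻¹b)^{(n+1)/2} √(det A)), where ωₙ is the volume of the Euclidean unit ball. -/
/-!
Put `s = bᵀA⁻¹b`. Cauchy–Schwarz for the form `A` gives `(bᵀv)² ≤ s · vᵀAv ≤ vᵀAv`, and under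
this bound `√(vᵀAv) + bᵀv < 1` is equivalent to the quadratic inequality
`vᵀ(A - bbᵀ)v + 2bᵀv < 1`. Completing the square, this is the ellipsoid `(v + m)ᵀP(v + m) < 1`
with `P = (1 - s)(A - bbᵀ)` and `m = A⁻¹b / (1 - s)`; by the matrix determinant lemma
`det P = (1 - s)ⁿ⁺¹ det A`. Writing `P = BᵀB`, the ellipsoid `{wᵀPw < 1}` is the preimage of the
Euclidean unit ball under `B`, so its volume is `ωₙ / |det B| = ωₙ / √(det P)`.
-/

open Matrix MeasureTheory
open scoped MatrixOrder

lemma Real.sqrt_add_lt_one_iff {q x : ℝ} (h : x ^ 2 ≤ q) :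
    √q + x < 1 ↔ q - x ^ 2 + 2 * x < 1 := by
  constructor
  · intro hlt
    have hpos : 0 < 1 - x := (Real.sqrt_nonneg q).trans_lt (by linarith)
    have := (Real.sqrt_lt' hpos).mp (by linarith)
    linarith
  · intro hlt
    have hpos : 0 < 1 - x := by nlinarith
    have := (Real.sqrt_lt' hpos).mpr (by linarith)
    linarith

namespace Matrix

section Algebra

variable {ι R : Type*} [Fintype ι]

lemma dotProduct_vecMulVec_mulVec [CommSemiring R] (x u w y : ι → R) :
    x ⬝ᵥ vecMulVec u w *ᵥ y = (x ⬝ᵥ u) * (w ⬝ᵥ y) := by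
  simp [vecMulVec_mulVec, dotProduct_smul, mul_comm]

lemma dotProduct_transpose_mul_self_mulVec [CommSemiring R] (B : Matrix ι ι R) (x y : ι → R) :
    x ⬝ᵥ (Bᵀ * B) *ᵥ y = (B *ᵥ x) ⬝ᵥ (B *ᵥ y) := by
  rw [← mulVec_mulVec, dotProduct_mulVec, vecMul_transpose]

lemma IsSymm.add_dotProduct_mulVec_add [CommRing R] {Q : Matrix ι ι R} (hQ : Q.IsSymm)
    {m b : ι → R} (hm : Q *ᵥ m = b) (v : ι → R) :
    (v + m) ⬝ᵥ Q *ᵥ (v + m) = v ⬝ᵥ Q *ᵥ v + 2 * (b ⬝ᵥ v) + b ⬝ᵥ m := by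
  have hmQ : m ⬝ᵥ Q *ᵥ v = b ⬝ᵥ v := by
    rw [dotProduct_mulVec, ← mulVec_transpose, hQ.eq, hm]
  simp only [mulVec_add, dotProduct_add, add_dotProduct, hm, hmQ, dotProduct_comm v b,
    dotProduct_comm m b]
  ring

variable [DecidableEq ι]

lemma mulVec_nonsing_inv_mulVec [CommRing R] {A : Matrix ι ι R} (hA : IsUnit A.det)
    (b : ι → R) : A *ᵥ (A⁻¹ *ᵥ b) = b := by
  rw [mulVec_mulVec, mul_nonsing_inv _ hA, one_mulVec]

lemma det_sub_vecMulVec [CommRing R] {A : Matrix ι ι R} (hA : IsUnit A.det) (u v : ι → R) :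
    (A - vecMulVec u v).det = A.det * (1 - v ⬝ᵥ A⁻¹ *ᵥ u) := by
  have : A - vecMulVec u v = A * (1 - replicateCol Unit (A⁻¹ *ᵥ u) * replicateRow Unit v) := by
    rw [mul_sub, mul_one, ← vecMulVec_eq, mul_vecMulVec, mulVec_nonsing_inv_mulVec hA]
  rw [this, det_mul, det_one_sub_mul_comm, det_unique (1 - _), sub_apply, one_apply_eq,
    replicateRow_mul_replicateCol_apply]

end Algebra

lemma PosDef.isSymm {ι : Type*} {A : Matrix ι ι ℝ} (hA : A.PosDef) : A.IsSymm := by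
  rw [IsSymm, ← conjTranspose_eq_transpose_of_trivial]
  exact hA.1

variable {ι : Type*} [Fintype ι]

lemma PosSemidef.exists_eq_transpose_mul_self {P : Matrix ι ι ℝ} (hP : P.PosSemidef) :
    ∃ B : Matrix ι ι ℝ, P = Bᵀ * B := by
  classical
  obtain ⟨B, hB⟩ := CStarAlgebra.nonneg_iff_eq_star_mul_self.mp hP.nonneg
  exact ⟨B, by rw [hB, star_eq_conjTranspose, conjTranspose_eq_transpose_of_trivial]⟩

lemma PosSemidef.sq_dotProduct_mulVec_le_s9 {P : Matrix ι ι ℝ} (hP : P.PosSemidef) (x y : ι → ℝ) :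
    (x ⬝ᵥ P *ᵥ y) ^ 2 ≤ (x ⬝ᵥ P *ᵥ x) * (y ⬝ᵥ P *ᵥ y) := by
  obtain ⟨B, rfl⟩ := hP.exists_eq_transpose_mul_self
  simp_rw [dotProduct_transpose_mul_self_mulVec, dotProduct, ← sq]
  exact Finset.sum_mul_sq_le_sq_mul_sq _ _ _

variable [DecidableEq ι]

theorem PosDef.volume_dotProduct_mulVec_lt_one {P : Matrix ι ι ℝ} (hP : P.PosDef) :
    volume {v : ι → ℝ | v ⬝ᵥ P *ᵥ v < 1}
      = volume {v : ι → ℝ | ∑ i, v i ^ 2 < 1} / ENNReal.ofReal √P.det := by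
  obtain ⟨B, rfl⟩ := hP.posSemidef.exists_eq_transpose_mul_self
  have hdet : √(Bᵀ * B).det = |B.det| := by
    rw [det_mul, det_transpose, Real.sqrt_mul_self_eq_abs]
  have hB : B.det ≠ 0 := fun h => by simpa [h] using hP.det_pos
  have hset : {v | v ⬝ᵥ (Bᵀ * B) *ᵥ v < 1} = toLin' B ⁻¹' {w | ∑ i, w i ^ 2 < 1} := by
    ext v
    rw [Set.mem_preimage, toLin'_apply, Set.mem_ofPred_eq, Set.mem_ofPred_eq,
      dotProduct_transpose_mul_self_mulVec]
    simp only [dotProduct, sq]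
  rw [hset, Measure.addHaar_preimage_linearMap _ (by rwa [LinearMap.det_toLin']),
    LinearMap.det_toLin', hdet, abs_inv, ENNReal.ofReal_inv_of_pos (abs_pos.mpr hB),
    ENNReal.div_eq_inv_mul]

namespace PosDef

variable {A : Matrix ι ι ℝ}

lemma sq_dotProduct_le (hA : A.PosDef) (b v : ι → ℝ) :
    (b ⬝ᵥ v) ^ 2 ≤ (b ⬝ᵥ A⁻¹ *ᵥ b) * (v ⬝ᵥ A *ᵥ v) := by
  have key : ∀ y, (A⁻¹ *ᵥ b) ⬝ᵥ A *ᵥ y = b ⬝ᵥ y := fun y => by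
    rw [dotProduct_mulVec, ← mulVec_transpose, hA.isSymm.eq,
      mulVec_nonsing_inv_mulVec hA.det_pos.ne'.isUnit]
  simpa only [key, dotProduct_comm (A⁻¹ *ᵥ b) b] using
    hA.posSemidef.sq_dotProduct_mulVec_le_s9 (A⁻¹ *ᵥ b) v

lemma sub_vecMulVec (hA : A.PosDef) {b : ι → ℝ} (hb : b ⬝ᵥ A⁻¹ *ᵥ b < 1) :
    (A - vecMulVec b b).PosDef := by
  have hbb : (vecMulVec b b).IsHermitian := by
    simpa using (posSemidef_vecMulVec_self_star b).1
  refine of_dotProduct_mulVec_pos (hA.1.sub hbb) fun v hv => ?_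
  have hAv : 0 < v ⬝ᵥ A *ᵥ v := by simpa using hA.dotProduct_mulVec_pos hv
  have hCS := hA.sq_dotProduct_le b v
  rw [star_trivial, sub_mulVec, dotProduct_sub, dotProduct_vecMulVec_mulVec, dotProduct_comm v b]
  nlinarith

lemma sub_vecMulVec_mulVec_center (hA : A.PosDef) {b : ι → ℝ} (hb : b ⬝ᵥ A⁻¹ *ᵥ b ≠ 1) :
    (A - vecMulVec b b) *ᵥ ((1 - b ⬝ᵥ A⁻¹ *ᵥ b)⁻¹ • A⁻¹ *ᵥ b) = b := by
  have hs : 1 - b ⬝ᵥ A⁻¹ *ᵥ b ≠ 0 := sub_ne_zero.mpr hb.symm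
  rw [mulVec_smul, sub_mulVec, mulVec_nonsing_inv_mulVec hA.det_pos.ne'.isUnit,
    vecMulVec_mulVec, op_smul_eq_smul]
  match_scalars
  field_simp

theorem sqrt_dotProduct_mulVec_add_lt_one_iff (hA : A.PosDef) {b : ι → ℝ}
    (hb : b ⬝ᵥ A⁻¹ *ᵥ b < 1) (v : ι → ℝ) :
    √(v ⬝ᵥ A *ᵥ v) + b ⬝ᵥ v < 1 ↔
      (v + (1 - b ⬝ᵥ A⁻¹ *ᵥ b)⁻¹ • A⁻¹ *ᵥ b) ⬝ᵥ ((1 - b ⬝ᵥ A⁻¹ *ᵥ b) • (A - vecMulVec b b)) *ᵥ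
        (v + (1 - b ⬝ᵥ A⁻¹ *ᵥ b)⁻¹ • A⁻¹ *ᵥ b) < 1 := by
  set s := b ⬝ᵥ A⁻¹ *ᵥ b
  have hs : 0 < 1 - s := by linarith
  have hx : (b ⬝ᵥ v) ^ 2 ≤ v ⬝ᵥ A *ᵥ v := by
    have : 0 ≤ v ⬝ᵥ A *ᵥ v := by simpa using hA.posSemidef.dotProduct_mulVec_nonneg v
    nlinarith [hA.sq_dotProduct_le b v]
  have hsymm : (A - vecMulVec b b).IsSymm := hA.isSymm.sub (transpose_vecMulVec b b)
  rw [Real.sqrt_add_lt_one_iff hx, smul_mulVec, dotProduct_smul,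
    hsymm.add_dotProduct_mulVec_add (hA.sub_vecMulVec_mulVec_center hb.ne), sub_mulVec,
    dotProduct_sub, dotProduct_vecMulVec_mulVec, dotProduct_smul, smul_eq_mul, dotProduct_comm v b,
    smul_eq_mul, mul_add, mul_inv_cancel_left₀ hs.ne', ← sq,
    ← lt_sub_iff_add_lt (a := (1 - s) * _), mul_lt_iff_lt_one_right hs]

end PosDef

end Matrix

theorem stmt9_general {n : ℕ} (A : Matrix (Fin n) (Fin n) ℝ) (hA : A.PosDef)
    (b : Fin n → ℝ) (hb : b ⬝ᵥ A⁻¹ *ᵥ b < 1)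
    (F : (Fin n → ℝ) → ℝ) (hF : ∀ v, F v = Real.sqrt (v ⬝ᵥ A *ᵥ v) + b ⬝ᵥ v) :
    volume {v : Fin n → ℝ | F v < 1}
      = volume {v : Fin n → ℝ | ∑ i : Fin n, (v i) ^ 2 < 1}
          / ENNReal.ofReal
              ((1 - b ⬝ᵥ A⁻¹ *ᵥ b) ^ (((n : ℝ) + 1) / 2) * Real.sqrt A.det) := by
  set s := b ⬝ᵥ A⁻¹ *ᵥ b
  have hs : 0 < 1 - s := by linarith
  have hball : {v | F v < 1} = (· + (1 - s)⁻¹ • A⁻¹ *ᵥ b) ⁻¹'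
      {w | w ⬝ᵥ ((1 - s) • (A - vecMulVec b b)) *ᵥ w < 1} := by
    ext v
    rw [Set.mem_ofPred_eq, hF]
    exact hA.sqrt_dotProduct_mulVec_add_lt_one_iff hb v
  have hdet : √((1 - s) • (A - vecMulVec b b)).det = (1 - s) ^ (((n : ℝ) + 1) / 2) * √A.det := by
    have hpow : √((1 - s) ^ (n + 1)) = (1 - s) ^ (((n : ℝ) + 1) / 2) := by
      rw [Real.sqrt_eq_rpow, ← Real.rpow_natCast, ← Real.rpow_mul hs.le]
      push_cast
      ring_nf
    rw [det_smul, det_sub_vecMulVec hA.det_pos.ne'.isUnit, Fintype.card_fin,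
      show (1 - s) ^ n * (A.det * (1 - s)) = (1 - s) ^ (n + 1) * A.det by ring,
      Real.sqrt_mul (by positivity), hpow]
  rw [hball, measure_preimage_add_right,
    PosDef.volume_dotProduct_mulVec_lt_one ((hA.sub_vecMulVec hb).smul hs), hdet]

/-- Volume of the Randers unit ball:
`vol {F < 1} = ωₙ / ((1 − bᵀA⁻¹b)^((n+1)/2) √(det A))`. -/
theorem stmt9 {n : ℕ} (A : Matrix (Fin n) (Fin n) ℝ) (hA : A.PosDef) (hAsymm : A.IsSymm)
    (b : Fin n → ℝ) (hb : b ⬝ᵥ A⁻¹ *ᵥ b < 1)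
    (F : (Fin n → ℝ) → ℝ) (hF : ∀ v, F v = Real.sqrt (v ⬝ᵥ A *ᵥ v) + b ⬝ᵥ v) :
    volume {v : Fin n → ℝ | F v < 1}
      = volume {v : Fin n → ℝ | ∑ i : Fin n, (v i) ^ 2 < 1}
          / ENNReal.ofReal
              ((1 - b ⬝ᵥ A⁻¹ *ᵥ b) ^ (((n : ℝ) + 1) / 2) * Real.sqrt A.det) :=
  stmt9_general A hA b hb F hF
end
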